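/- arXiv:1811.11545 — 3 statements merged into one kernel-verified Lean document; each statement's English description precedes it below -/
import Mathlib

section
/- Let m ≥ 3 be an odd integer and let c be an integer with gcd(c,m) = 1. Then for every residue class r modulo m there exists an integer n ≥ 0 such that 2^n + c·n ≡ r (mod m). In other words, the sequence {2^n + c·n mod m : n ≥ 0} visits all m residue classes modulo m. -/
private lemma lin_solve (m : ℕ) (hm : 0 < m) (c : ℤ) (hc : Int.gcd c m = 1)
    (d : ℕ) (s : ℤ) (hs : ((Nat.gcd d m : ℕ) : ℤ) ∣ s) :
    ∃ k : ℕ, c * d * k ≡ s [ZMOD (m : ℤ)] := by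
  obtain ⟨t, ht⟩ := hs
  have hb1 : ((Int.gcd c m : ℕ) : ℤ) = c * Int.gcdA c m + m * Int.gcdB c m :=
    Int.gcd_eq_gcd_ab c m
  rw [hc] at hb1
  have h1 : c * Int.gcdA c m ≡ 1 [ZMOD (m : ℤ)] := by
    rw [Int.modEq_iff_dvd]
    exact ⟨Int.gcdB c m, by push_cast at hb1; linear_combination hb1⟩
  have hb2 : ((Nat.gcd d m : ℕ) : ℤ) = d * Nat.gcdA d m + m * Nat.gcdB d m :=
    Nat.gcd_eq_gcd_ab d m
  have h2 : (d : ℤ) * Nat.gcdA d m ≡ (Nat.gcd d m : ℤ) [ZMOD (m : ℤ)] := by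
    rw [Int.modEq_iff_dvd]
    exact ⟨Nat.gcdB d m, by linear_combination hb2⟩
  set k : ℤ := Int.gcdA c m * Nat.gcdA d m * t with hk
  have hck : c * d * k ≡ s [ZMOD (m : ℤ)] := by
    calc c * d * k = (c * Int.gcdA c m) * ((d : ℤ) * Nat.gcdA d m) * t := by rw [hk]; ring
    _ ≡ 1 * (Nat.gcd d m : ℤ) * t [ZMOD (m : ℤ)] := (h1.mul h2).mul_right t
    _ = s := by rw [ht]; ring
  refine ⟨(k % m).toNat, ?_⟩
  have hmod : ((k % m).toNat : ℤ) = k % m :=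
    Int.toNat_of_nonneg (Int.emod_nonneg k (by exact_mod_cast hm.ne'))
  have hkk : ((k % m).toNat : ℤ) ≡ k [ZMOD (m : ℤ)] := by
    rw [hmod]; exact Int.emod_emod_of_dvd k dvd_rfl
  calc c * d * ((k % m).toNat : ℤ) ≡ c * d * k [ZMOD (m : ℤ)] := hkk.mul_left _
  _ ≡ s [ZMOD (m : ℤ)] := hck

private lemma aux_main : ∀ m : ℕ, Odd m → ∀ c : ℤ, Int.gcd c m = 1 →
    ∀ r : ℤ, ∃ n : ℕ, (2 : ℤ) ^ n + c * n ≡ r [ZMOD (m : ℤ)] := by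
  intro m
  induction m using Nat.strong_induction_on with
  | _ m ih =>
    intro hodd c hc r
    rcases Nat.lt_or_ge m 2 with hm2 | hm2
    · interval_cases m
      · simp [Nat.odd_iff] at hodd
      · exact ⟨0, by simpa using (Int.modEq_one : (2:ℤ)^0 + c * 0 ≡ r [ZMOD 1])⟩
    · have hm1 : 1 < m := hm2
      have hm0 : 0 < m := by omega
      set d := Nat.totient m with hd
      have hdpos : 0 < d := Nat.totient_pos.mpr hm0
      have hdlt : d < m := Nat.totient_lt m hm1
      set g := Nat.gcd d m with hg
      have hglt : g < m := lt_of_le_of_lt (Nat.le_of_dvd hdpos (Nat.gcd_dvd_left d m)) hdlt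
      have hgdvd : g ∣ m := Nat.gcd_dvd_right d m
      -- Euler: 2^d ≡ 1 mod m
      have hcop2 : Nat.Coprime 2 m := (Nat.Prime.coprime_iff_not_dvd Nat.prime_two).mpr
        (Nat.two_dvd_ne_zero.mpr (Nat.odd_iff.mp hodd))
      have heuler : (2 : ℤ) ^ d ≡ 1 [ZMOD (m : ℤ)] := by
        have := Nat.ModEq.pow_totient hcop2
        have h2 : ((2 ^ d : ℕ) : ℤ) ≡ ((1 : ℕ) : ℤ) [ZMOD ((m : ℕ) : ℤ)] :=
          Int.natCast_modEq_iff.mpr this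
        simpa using h2
      -- surjectivity mod g
      have hsurj : ∃ a : ℕ, (2 : ℤ) ^ a + c * a ≡ r [ZMOD (g : ℤ)] := by
        rcases eq_or_ne g 1 with hg1 | hg1
        · exact ⟨0, by rw [hg1]; exact Int.modEq_one⟩
        · have hgodd : Odd g := by
            rcases Nat.even_or_odd g with he | ho
            · exfalso
              obtain ⟨e, he2⟩ := hgdvd
              exact (Nat.not_even_iff_odd.mpr hodd) (he2 ▸ he.mul_right e)
            · exact ho
          have hcg : Int.gcd c (g : ℤ) = 1 := by
            have hdvd1 : Int.gcd c (g : ℤ) ∣ Int.gcd c (m : ℤ) := by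
              unfold Int.gcd
              simp only [Int.natAbs_natCast]
              exact Nat.gcd_dvd_gcd_of_dvd_right _ hgdvd
            rw [hc] at hdvd1
            exact Nat.dvd_one.mp hdvd1
          exact ih g hglt hgodd c hcg r
      obtain ⟨a, ha⟩ := hsurj
      -- solve c*d*k ≡ r - (2^a + c*a) mod m
      have hsdvd : ((g : ℕ) : ℤ) ∣ (r - ((2:ℤ) ^ a + c * a)) := ha.dvd
      obtain ⟨k, hk⟩ := lin_solve m hm0 c hc d (r - ((2:ℤ) ^ a + c * a)) hsdvd
      refine ⟨a + d * k, ?_⟩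
      have hpow : (2 : ℤ) ^ (a + d * k) ≡ (2 : ℤ) ^ a [ZMOD (m : ℤ)] := by
        rw [pow_add, pow_mul]
        calc (2:ℤ)^a * ((2:ℤ)^d)^k ≡ (2:ℤ)^a * 1^k [ZMOD (m:ℤ)] :=
          ((heuler.pow k).mul_left _)
        _ = (2:ℤ)^a := by ring
      have hlin : c * ((a + d * k : ℕ) : ℤ) ≡ c * a + (r - ((2:ℤ) ^ a + c * a)) [ZMOD (m : ℤ)] := by
        push_cast
        calc c * ((a : ℤ) + d * k) = c * a + c * d * k := by ring
        _ ≡ c * a + (r - ((2:ℤ) ^ a + c * a)) [ZMOD (m:ℤ)] := hk.add_left _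
      calc (2:ℤ) ^ (a + d * k) + c * ((a + d * k : ℕ) : ℤ)
          ≡ (2:ℤ)^a + (c * a + (r - ((2:ℤ) ^ a + c * a))) [ZMOD (m:ℤ)] := hpow.add hlin
      _ = r := by ring

/-- Let `m ≥ 3` be odd and `gcd(c, m) = 1`. Then the sequence
`2^n + c n (mod m)` visits every residue class modulo `m`. -/
theorem pow_two_add_lin_surjective_mod (m : ℕ) (hm : 3 ≤ m) (hodd : Odd m)
    (c : ℤ) (hc : Int.gcd c m = 1) :
    ∀ r : ℤ, ∃ n : ℕ, 2 ^ n + c * n ≡ r [ZMOD (m : ℤ)] :=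
  fun r => aux_main m hodd c hc r
end

section
/- Let m ≥ 3 be an odd integer, let c be an integer with gcd(c,m) = 1, let l be the multiplicative order of 2 modulo m, and set Δ = gcd(l, m). Suppose that either Δ = 1, or for every residue class s modulo Δ there exists an integer r ≥ 0 with 2^r + c·r ≡ s (mod Δ). Then for every residue class t modulo m there exists an integer n ≥ 0 with 2^n + c·n ≡ t (mod m). -/
/-- Let `m ≥ 3` be odd, `gcd(c, m) = 1`, `l` the multiplicative order of `2`
modulo `m`, and `Δ = gcd(l, m)`. If `Δ = 1`, or every residue class modulo `Δ` is hit by the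
sequence `2^r + c r (mod Δ)`, then every residue class modulo `m` is hit by the sequence
`2^n + c n (mod m)`. -/
theorem pow_two_add_lin_mod_reduction (m : ℕ) (hm : 3 ≤ m) (hodd : Odd m)
    (c : ℤ) (hc : Int.gcd c m = 1)
    (l : ℕ) (hl : 0 < l) (hl1 : (2 : ℤ) ^ l ≡ 1 [ZMOD (m : ℤ)])
    (hlmin : ∀ j : ℕ, 0 < j → (2 : ℤ) ^ j ≡ 1 [ZMOD (m : ℤ)] → l ≤ j)
    (Δ : ℕ) (hΔ : Δ = Nat.gcd l m)
    (hyp : Δ = 1 ∨ ∀ s : ℤ, ∃ r : ℕ, 2 ^ r + c * r ≡ s [ZMOD (Δ : ℤ)]) :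
    ∀ t : ℤ, ∃ n : ℕ, 2 ^ n + c * n ≡ t [ZMOD (m : ℤ)] := by
  intro t
  have hm0 : (0 : ℤ) < (m : ℤ) := by exact_mod_cast lt_of_lt_of_le (by norm_num) hm
  -- in either case, every residue mod Δ is hit
  have hyp' : ∀ s : ℤ, ∃ r : ℕ, 2 ^ r + c * r ≡ s [ZMOD (Δ : ℤ)] := by
    rcases hyp with h1 | h
    · intro s
      refine ⟨0, ?_⟩
      rw [h1]
      exact_mod_cast Int.modEq_one
    · exact h
  obtain ⟨r, hr⟩ := hyp' t
  obtain ⟨e, he⟩ := hr.dvd  -- he : t - (2^r + c*r) = Δ * e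
  -- Bézout for gcd(l, m)
  set A := Int.gcdA (l : ℤ) (m : ℤ) with hA
  set B := Int.gcdB (l : ℤ) (m : ℤ) with hB
  have hΔ2 : (Δ : ℤ) = (l : ℤ) * A + (m : ℤ) * B := by
    have h := Int.gcd_eq_gcd_ab (l : ℤ) (m : ℤ)
    rw [Int.gcd_natCast_natCast, ← hΔ] at h
    exact_mod_cast h
  -- inverse of c mod m
  obtain ⟨u, v, huv⟩ : IsCoprime c (m : ℤ) := Int.isCoprime_iff_gcd_eq_one.mpr hc
  -- the key divisibility: c*l*(u*A*e) ≡ t - (2^r + c*r) (mod m)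
  have hk : t - ((2:ℤ) ^ r + c * r) - c * (l : ℤ) * (u * A * e) =
      (m : ℤ) * ((v * (l : ℤ) * A + B) * e) := by
    linear_combination he + e * hΔ2 - ((l : ℤ) * A * e) * huv
  set k : ℤ := u * A * e with hkdef
  have hKnn : 0 ≤ k % (m : ℤ) := Int.emod_nonneg k hm0.ne'
  set K : ℕ := (k % (m : ℤ)).toNat with hKdef
  have hKz : (K : ℤ) = k % (m : ℤ) := Int.toNat_of_nonneg hKnn
  have hKk : (K : ℤ) ≡ k [ZMOD (m : ℤ)] := by
    show (K : ℤ) % (m : ℤ) = k % (m : ℤ)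
    rw [hKz, Int.emod_emod_of_dvd _ dvd_rfl]
  have hpow : (2 : ℤ) ^ (r + l * K) ≡ 2 ^ r [ZMOD (m : ℤ)] := by
    calc (2 : ℤ) ^ (r + l * K) = 2 ^ r * ((2 : ℤ) ^ l) ^ K := by rw [pow_add, pow_mul]
      _ ≡ 2 ^ r * 1 ^ K [ZMOD (m : ℤ)] := (hl1.pow K).mul_left _
      _ = 2 ^ r := by rw [one_pow, mul_one]
  have hcl : c * (l : ℤ) * (K : ℤ) ≡ t - ((2:ℤ) ^ r + c * r) [ZMOD (m : ℤ)] := by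
    have h1 : c * (l : ℤ) * (K : ℤ) ≡ c * (l : ℤ) * k [ZMOD (m : ℤ)] := hKk.mul_left _
    have h2 : c * (l : ℤ) * k ≡ t - ((2:ℤ) ^ r + c * r) [ZMOD (m : ℤ)] :=
      Int.modEq_iff_dvd.mpr ⟨(v * (l : ℤ) * A + B) * e, hk⟩
    exact h1.trans h2
  refine ⟨r + l * K, ?_⟩
  push_cast
  calc (2 : ℤ) ^ (r + l * K) + c * ((r : ℤ) + (l : ℤ) * (K : ℤ))
      = 2 ^ (r + l * K) + (c * r + c * (l : ℤ) * (K : ℤ)) := by ring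
    _ ≡ 2 ^ r + (c * r + (t - ((2:ℤ) ^ r + c * r))) [ZMOD (m : ℤ)] :=
        hpow.add (Int.ModEq.rfl.add hcl)
    _ = t := by ring
end

section
/- Let A ⊆ ℝ² be a non-empty bounded set, let π₁(A) = {x : ∃y, (x,y) ∈ A}, π₂(A) = {y : ∃x, (x,y) ∈ A}, and Σ(A) = {x + y : (x,y) ∈ A}. Then dim_H(π₁(A)) ≤ dim_H(Σ(A)) + upper box dimension of π₂(A). -/
/-!
Since `x = (x + y) - y`, `π₁(A)` is the image of `Σ(A) × π₂(A)` under the Lipschitz map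
`(u, v) ↦ u - v`, so it suffices to bound `dim_H (E × F)` by `dim_H E` plus the upper box
dimension of `F`. Take `s > dim_H E` and `t` above the upper box dimension of `F`. Cover `E` by
sets `U n` with `∑ diam (U n) ^ s` small; at every small scale `ρ`, `F` is covered by at most
`ρ ^ (-t)` intervals of length `ρ`. With `ρ n ≥ diam (U n)`, the set `U n × F` is covered by at
most `ρ n ^ (-t)` sets of diameter `ρ n`, contributing at most `ρ n ^ s` to the `(s + t)`-sum.
Hence `μH[s + t] (E × F) = 0`.
-/

open MeasureTheory Filter

/-- `coverNum F r` is the minimal number of closed intervals of length `r`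
(i.e. closed balls of radius `r/2`) needed to cover `F ⊆ ℝ`. -/
noncomputable def coverNum (F : Set ℝ) (r : ℝ) : ℕ :=
  sInf {n : ℕ | ∃ s : Finset ℝ, s.card = n ∧ F ⊆ ⋃ x ∈ s, Metric.closedBall x (r / 2)}

noncomputable def upperBoxDim (F : Set ℝ) : ℝ :=
  limsup (fun r : ℝ => -Real.log (coverNum F r) / Real.log r) (nhdsWithin 0 (Set.Ioi 0))

open Set Metric Bornology
open scoped ENNReal NNReal Topology

section CoverNum

variable {F : Set ℝ} {r : ℝ}

theorem exists_finset_card_le_cover_closedBall_zero {R : ℝ} (hR : 0 ≤ R) (hr : 0 < r) :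
    ∃ s : Finset ℝ, (s.card : ℝ) ≤ 2 * R / r + 3 ∧
      closedBall 0 R ⊆ ⋃ x ∈ s, closedBall x (r / 2) := by
  set M : ℤ := ⌈R / r⌉
  have hM : (M : ℝ) < R / r + 1 := Int.ceil_lt_add_one _
  have hM0 : 0 ≤ M := Int.ceil_nonneg (by positivity)
  refine ⟨(Finset.Icc (-M) M).image (fun k : ℤ => k * r), ?_, fun x hx => ?_⟩
  · have hcard : ((Finset.Icc (-M) M).card : ℤ) = 2 * M + 1 := by rw [Int.card_Icc]; omega
    calc (((Finset.Icc (-M) M).image _).card : ℝ) ≤ (Finset.Icc (-M) M).card := by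
          exact_mod_cast Finset.card_image_le
      _ = 2 * M + 1 := by exact_mod_cast hcard
      _ ≤ 2 * R / r + 3 := by rw [mul_div_assoc]; linarith
  · have hxr : |x / r| ≤ R / r := by
      rw [abs_div, abs_of_pos hr]
      exact div_le_div_of_nonneg_right (mem_closedBall_zero_iff.1 hx) hr.le
    obtain ⟨h₁, h₂⟩ := abs_le.1 hxr
    obtain ⟨h₃, h₄⟩ := abs_le.1 (abs_sub_round (x / r))
    have hMR : R / r ≤ M := Int.le_ceil _
    have hlo : ((-M - 1 : ℤ) : ℝ) < round (x / r) := by push_cast; linarith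
    have hhi : (round (x / r) : ℝ) < ((M + 1 : ℤ) : ℝ) := by push_cast; linarith
    have hlo' := Int.cast_lt.1 hlo
    have hhi' := Int.cast_lt.1 hhi
    refine mem_iUnion₂.2 ⟨round (x / r) * r,
      Finset.mem_image_of_mem _ (Finset.mem_Icc.2 ⟨by omega, by omega⟩), ?_⟩
    rw [mem_closedBall, Real.dist_eq]
    calc |x - round (x / r) * r| = |x / r - round (x / r)| * r := by
          rw [← abs_of_pos hr, ← abs_mul, abs_of_pos hr, sub_mul, div_mul_cancel₀ _ hr.ne']
      _ ≤ 1 / 2 * r := by gcongr; exact abs_sub_round _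
      _ = r / 2 := by ring

theorem coverNum_le_card {s : Finset ℝ} (h : F ⊆ ⋃ x ∈ s, closedBall x (r / 2)) :
    coverNum F r ≤ s.card :=
  Nat.sInf_le ⟨s, rfl, h⟩

theorem Bornology.IsBounded.exists_card_eq_coverNum (hF : IsBounded F) (hr : 0 < r) :
    ∃ s : Finset ℝ, s.card = coverNum F r ∧ F ⊆ ⋃ x ∈ s, closedBall x (r / 2) := by
  obtain ⟨R, hR, hFR⟩ := hF.subset_closedBall_lt 0 0
  obtain ⟨s, -, hs⟩ := exists_finset_card_le_cover_closedBall_zero hR.le hr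
  exact Nat.sInf_mem (s := {n | ∃ s : Finset ℝ, s.card = n ∧ F ⊆ ⋃ x ∈ s, closedBall x (r / 2)})
    ⟨s.card, s, rfl, hFR.trans hs⟩

theorem Bornology.IsBounded.exists_coverNum_le_div (hF : IsBounded F) :
    ∃ C : ℝ, 1 ≤ C ∧ ∀ r, 0 < r → r ≤ 1 → (coverNum F r : ℝ) ≤ C / r := by
  obtain ⟨R, hR, hFR⟩ := hF.subset_closedBall_lt 0 0
  refine ⟨2 * R + 3, by linarith, fun r hr hr1 => ?_⟩
  obtain ⟨s, hs, hcover⟩ := exists_finset_card_le_cover_closedBall_zero hR.le hr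
  have h3 : (3 : ℝ) ≤ 3 / r := by rw [le_div_iff₀ hr]; linarith
  calc (coverNum F r : ℝ) ≤ s.card := by exact_mod_cast coverNum_le_card (hFR.trans hcover)
    _ ≤ 2 * R / r + 3 := hs
    _ ≤ (2 * R + 3) / r := by rw [add_div]; linarith

end CoverNum

section UpperBoxDim

variable {F : Set ℝ}

theorem Bornology.IsBounded.isBoundedUnder_coverNum_ratio (hF : IsBounded F) :
    IsBoundedUnder (· ≤ ·) (𝓝[>] 0) (fun r : ℝ => -Real.log (coverNum F r) / Real.log r) := by
  obtain ⟨C, hC, hN⟩ := hF.exists_coverNum_le_div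
  refine isBoundedUnder_of_eventually_le (a := Real.log C + 1) ?_
  filter_upwards [Ioo_mem_nhdsGT (Real.exp_pos (-1))] with r ⟨hr0, hr⟩
  have hL : 1 ≤ -Real.log r := by
    have := Real.log_lt_log hr0 hr
    rw [Real.log_exp] at this
    linarith
  have hr1 : r ≤ 1 := hr.le.trans (Real.exp_le_one_iff.2 (by norm_num))
  have hlogN : Real.log (coverNum F r) ≤ Real.log C + -Real.log r := by
    rw [← sub_eq_add_neg, ← Real.log_div (by positivity) hr0.ne']
    rcases (Nat.cast_nonneg (coverNum F r) : (0 : ℝ) ≤ _).eq_or_lt with h | h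
    · rw [← h, Real.log_zero]
      exact Real.log_nonneg (by rw [le_div_iff₀ hr0]; linarith)
    · exact Real.log_le_log h (hN r hr0 hr1)
  rw [← neg_div_neg_eq, neg_neg, div_le_iff₀ (by linarith)]
  nlinarith [mul_nonneg (Real.log_nonneg hC) (sub_nonneg.2 hL)]

theorem Bornology.IsBounded.eventually_coverNum_le_rpow (hF : IsBounded F) {t : ℝ}
    (ht : upperBoxDim F < t) : ∀ᶠ r in 𝓝[>] 0, (coverNum F r : ℝ) ≤ r ^ (-t) := by
  filter_upwards [eventually_lt_of_limsup_lt ht hF.isBoundedUnder_coverNum_ratio,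
    Ioo_mem_nhdsGT one_pos] with r hratio ⟨hr0, hr1⟩
  rcases (Nat.cast_nonneg (coverNum F r) : (0 : ℝ) ≤ _).eq_or_lt with h | h
  · rw [← h]
    positivity
  · rw [div_lt_iff_of_neg (Real.log_neg hr0 hr1)] at hratio
    rw [← Real.log_le_log_iff h (by positivity), Real.log_rpow hr0]
    linarith

end UpperBoxDim

theorem ediam_prod_le {X Y : Type*} [PseudoEMetricSpace X] [PseudoEMetricSpace Y] (s : Set X)
    (t : Set Y) : ediam (s ×ˢ t) ≤ max (ediam s) (ediam t) :=
  ediam_le fun p hp q hq => by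
    rw [Prod.edist_eq]
    exact max_le_max (edist_le_ediam_of_mem hp.1 hq.1) (edist_le_ediam_of_mem hp.2 hq.2)

theorem tsum_ediam_prod_closedBall_rpow_le {X : Type*} [PseudoEMetricSpace X] {U : Set X}
    {c : Finset ℝ} {ρ s t : ℝ} (hρ : 0 < ρ) (hst : 0 ≤ s + t) (hU : ediam U ≤ ENNReal.ofReal ρ)
    (hc : (c.card : ℝ) ≤ ρ ^ (-t)) :
    ∑' x : c, ediam (U ×ˢ closedBall (x : ℝ) (ρ / 2)) ^ (s + t) ≤ ENNReal.ofReal ρ ^ s := by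
  have hball (x : ℝ) : ediam (closedBall x (ρ / 2)) ≤ ENNReal.ofReal ρ :=
    ediam_le_of_forall_dist_le fun y hy z hz => (dist_triangle_right y z x).trans
      (by linarith [mem_closedBall.1 hy, mem_closedBall.1 hz])
  calc ∑' x : c, ediam (U ×ˢ closedBall (x : ℝ) (ρ / 2)) ^ (s + t)
      ≤ ∑' _ : c, ENNReal.ofReal ρ ^ (s + t) := ENNReal.tsum_le_tsum fun x =>
        ENNReal.rpow_le_rpow ((ediam_prod_le _ _).trans (max_le hU (hball x))) hst
    _ = c.card * ENNReal.ofReal (ρ ^ (s + t)) := by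
        rw [tsum_fintype, Finset.sum_const, Finset.card_univ, Fintype.card_coe, nsmul_eq_mul,
          ENNReal.ofReal_rpow_of_pos hρ]
    _ ≤ ENNReal.ofReal (ρ ^ (-t)) * ENNReal.ofReal (ρ ^ (s + t)) := by
        gcongr
        rw [← ENNReal.ofReal_natCast]
        exact ENNReal.ofReal_le_ofReal hc
    _ = ENNReal.ofReal ρ ^ s := by
        rw [← ENNReal.ofReal_mul (by positivity), ← Real.rpow_add hρ, neg_add_cancel_comm_assoc,
          ENNReal.ofReal_rpow_of_pos hρ]

theorem exists_real_between_rpow_lt_add {a : ℝ≥0∞} {b : ℝ} (hab : a < ENNReal.ofReal b) {s : ℝ}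
    (hs : 0 ≤ s) {η : ℝ≥0∞} (hη : η ≠ 0) :
    ∃ ρ : ℝ, 0 < ρ ∧ ρ < b ∧ a ≤ ENNReal.ofReal ρ ∧ ENNReal.ofReal ρ ^ s < a ^ s + η := by
  have ha : a ^ s < a ^ s + η :=
    ENNReal.lt_add_right (ENNReal.rpow_ne_top_of_nonneg hs hab.ne_top) hη
  have := nhdsGT_neBot_of_exists_gt ⟨_, hab⟩
  have hcont : ∀ᶠ x in 𝓝[>] a, x ^ s < a ^ s + η :=
    nhdsWithin_le_nhds (ENNReal.continuous_rpow_const.continuousAt.eventually (gt_mem_nhds ha))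
  obtain ⟨x, hxs, hax, hxb⟩ := (hcont.and (Ioo_mem_nhdsGT hab)).exists
  have hx : x ≠ ⊤ := hxb.ne_top
  refine ⟨x.toReal, ENNReal.toReal_pos (pos_of_gt hax).ne' hx,
    ENNReal.toReal_lt_of_lt_ofReal hxb, ?_, ?_⟩ <;> rw [ENNReal.ofReal_toReal hx]
  · exact hax.le
  · exact hxs

section Hausdorff

variable {X : Type*} [EMetricSpace X] [MeasurableSpace X] [BorelSpace X] {d : ℝ} {S : Set X}

theorem exists_cover_tsum_ediam_rpow_lt_of_hausdorffMeasure_eq_zero (hd : 0 < d)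
    (hS : μH[d] S = 0) {r ε : ℝ≥0∞} (hr : 0 < r) (hε : 0 < ε) :
    ∃ U : ℕ → Set X, S ⊆ ⋃ n, U n ∧ (∀ n, ediam (U n) ≤ r) ∧ ∑' n, ediam (U n) ^ d < ε := by
  have hlt : (⨅ (U : ℕ → Set X) (_ : S ⊆ ⋃ n, U n) (_ : ∀ n, ediam (U n) ≤ r),
      ∑' n, ⨆ _ : (U n).Nonempty, ediam (U n) ^ d) < ε := by
    refine lt_of_le_of_lt ?_ hε
    rw [← hS, Measure.hausdorffMeasure_apply]
    exact le_iSup₂ (f := fun r' (_ : 0 < r') => ⨅ (U : ℕ → Set X) (_ : S ⊆ ⋃ n, U n)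
      (_ : ∀ n, ediam (U n) ≤ r'), ∑' n, ⨆ _ : (U n).Nonempty, ediam (U n) ^ d) r hr
  simp only [iInf_lt_iff] at hlt
  obtain ⟨U, hSU, hUr, hsum⟩ := hlt
  refine ⟨U, hSU, hUr, lt_of_le_of_lt (ENNReal.tsum_le_tsum fun n => ?_) hsum⟩
  rcases (U n).eq_empty_or_nonempty with h | h
  · simp [h, hd]
  · exact le_iSup (fun _ : (U n).Nonempty => ediam (U n) ^ d) h

theorem hausdorffMeasure_eq_zero_of_forall_exists_cover (hd : 0 < d)
    (h : ∀ ε : ℝ≥0∞, 0 < ε → ∃ (ι : Type) (_ : Countable ι) (V : ι → Set X),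
      S ⊆ ⋃ i, V i ∧ ∑' i, ediam (V i) ^ d ≤ ε) :
    μH[d] S = 0 := by
  choose ι hι V hSV hsum using fun n : ℕ =>
    h (n : ℝ≥0∞)⁻¹ (ENNReal.inv_pos.2 (ENNReal.natCast_ne_top n))
  have hdiam : ∀ n i, ediam (V n i) ≤ ((n : ℝ≥0∞)⁻¹) ^ d⁻¹ := fun n i =>
    (ENNReal.le_rpow_inv_iff hd).2 ((ENNReal.le_tsum i).trans (hsum n))
  have hr : Tendsto (fun n : ℕ => ((n : ℝ≥0∞)⁻¹) ^ d⁻¹) atTop (𝓝 0) := by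
    have := (ENNReal.continuous_rpow_const (y := d⁻¹)).tendsto 0 |>.comp
      ENNReal.tendsto_inv_nat_nhds_zero
    rwa [ENNReal.zero_rpow_of_pos (inv_pos.2 hd)] at this
  have hsum_tendsto : Tendsto (fun n => ∑' i, ediam (V n i) ^ d) atTop (𝓝 0) :=
    tendsto_of_tendsto_of_tendsto_of_le_of_le tendsto_const_nhds
      ENNReal.tendsto_inv_nat_nhds_zero (fun _ => zero_le) hsum
  refine le_antisymm ?_ zero_le
  calc μH[d] S ≤ liminf (fun n => ∑' i, ediam (V n i) ^ d) atTop :=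
        Measure.hausdorffMeasure_le_liminf_tsum d S _ hr V (Eventually.of_forall hdiam)
          (Eventually.of_forall hSV)
    _ = 0 := hsum_tendsto.liminf_eq

theorem hausdorffMeasure_prod_eq_zero_of_coverNum_le {E : Set X} {F : Set ℝ} (hF : IsBounded F)
    {s t : ℝ} (hs : 0 < s) (ht : 0 ≤ t) (hE : μH[s] E = 0)
    (hcov : ∀ᶠ r in 𝓝[>] 0, (coverNum F r : ℝ) ≤ r ^ (-t)) :
    μH[s + t] (E ×ˢ F) = 0 := by
  obtain ⟨r₀, hr₀ : 0 < r₀, hcov⟩ := mem_nhdsGT_iff_exists_Ioo_subset.1 hcov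
  refine hausdorffMeasure_eq_zero_of_forall_exists_cover (by positivity) fun ε hε => ?_
  obtain ⟨U, hEU, hUr, hUsum⟩ := exists_cover_tsum_ediam_rpow_lt_of_hausdorffMeasure_eq_zero hs hE
    (ENNReal.ofReal_pos.2 (half_pos hr₀)) (ENNReal.half_pos hε.ne')
  obtain ⟨η, hη, hηsum⟩ := ENNReal.exists_pos_sum_of_countable (ENNReal.half_pos hε.ne').ne' ℕ
  -- `U n` may be a point, so its scale is enlarged to some `ρ n > 0` at the cost `η n`
  choose ρ hρ0 hρr₀ hUρ hρs using fun n => exists_real_between_rpow_lt_add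
    ((hUr n).trans_lt ((ENNReal.ofReal_lt_ofReal_iff hr₀).2 (half_lt_self hr₀))) hs.le
    (ENNReal.coe_ne_zero.2 (hη n).ne')
  choose c hc hFc using fun n => hF.exists_card_eq_coverNum (hρ0 n)
  refine ⟨Σ n, c n, inferInstance, fun p => U p.1 ×ˢ closedBall (p.2 : ℝ) (ρ p.1 / 2), ?_, ?_⟩
  · rintro ⟨x, y⟩ ⟨hx, hy⟩
    obtain ⟨n, hn⟩ := mem_iUnion.1 (hEU hx)
    obtain ⟨z, hz, hyz⟩ := mem_iUnion₂.1 (hFc n hy)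
    exact mem_iUnion.2 ⟨⟨n, z, hz⟩, hn, hyz⟩
  · calc ∑' p : Σ n, c n, ediam (U p.1 ×ˢ closedBall (p.2 : ℝ) (ρ p.1 / 2)) ^ (s + t)
        = ∑' n, ∑' x : c n, ediam (U n ×ˢ closedBall (x : ℝ) (ρ n / 2)) ^ (s + t) :=
          ENNReal.tsum_sigma' _
      _ ≤ ∑' n, (ediam (U n) ^ s + η n) := ENNReal.tsum_le_tsum fun n =>
          (tsum_ediam_prod_closedBall_rpow_le (hρ0 n) (by linarith) (hUρ n)
            (by rw [hc]; exact hcov ⟨hρ0 n, hρr₀ n⟩)).trans (hρs n).le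
      _ = ∑' n, ediam (U n) ^ s + ∑' n, (η n : ℝ≥0∞) := ENNReal.tsum_add
      _ ≤ ε / 2 + ε / 2 := add_le_add hUsum.le hηsum.le
      _ = ε := ENNReal.add_halves ε

end Hausdorff

theorem dimH_prod_le_dimH_add_upperBoxDim {X : Type*} [EMetricSpace X] (E : Set X) {F : Set ℝ}
    (hF : IsBounded F) : dimH (E ×ˢ F) ≤ dimH E + ENNReal.ofReal (upperBoxDim F) := by
  borelize X
  have key (s t : ℝ≥0) (hs : dimH E < s) (ht : upperBoxDim F < t) :
      dimH (E ×ˢ F) ≤ (s + t : ℝ≥0) := by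
    refine dimH_le_of_hausdorffMeasure_ne_top ?_
    rw [NNReal.coe_add]
    exact ne_of_eq_of_ne (hausdorffMeasure_prod_eq_zero_of_coverNum_le hF
      (by exact_mod_cast zero_le.trans_lt hs) t.2 (hausdorffMeasure_of_dimH_lt hs)
      (hF.eventually_coverNum_le_rpow ht)) ENNReal.zero_ne_top
  refine ENNReal.le_of_forall_pos_le_add fun ε hε hlt => ?_
  have hE : dimH E ≠ ⊤ := (le_self_add.trans_lt hlt).ne
  have hε2 : 0 < ε / 2 := half_pos hε
  calc dimH (E ×ˢ F)
      ≤ ((dimH E).toNNReal + ε / 2 + ((upperBoxDim F).toNNReal + ε / 2) : ℝ≥0) := by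
        refine key _ _ ?_ ?_
        · rw [ENNReal.coe_add, ENNReal.coe_toNNReal hE]
          exact ENNReal.lt_add_right hE (by exact_mod_cast hε2.ne')
        · push_cast
          linarith [Real.le_coe_toNNReal (upperBoxDim F)]
    _ = dimH E + ENNReal.ofReal (upperBoxDim F) + ε := by
        rw [show (dimH E).toNNReal + ε / 2 + ((upperBoxDim F).toNNReal + ε / 2) =
          (dimH E).toNNReal + (upperBoxDim F).toNNReal + ε by ring]
        rw [ENNReal.coe_add, ENNReal.coe_add, ENNReal.coe_toNNReal hE, ENNReal.ofReal]

theorem dimH_fst_le_dimH_sum_add_upperBoxDim_snd_general (A : Set (ℝ × ℝ))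
    (hbd : Bornology.IsBounded A) :
    dimH (Prod.fst '' A) ≤
      dimH ((fun p : ℝ × ℝ => p.1 + p.2) '' A) + ENNReal.ofReal (upperBoxDim (Prod.snd '' A)) := by
  set E := (fun p : ℝ × ℝ => p.1 + p.2) '' A
  set F := Prod.snd '' A
  have hsub : Prod.fst '' A ⊆ (fun q : ℝ × ℝ => q.1 - q.2) '' (E ×ˢ F) := by
    rintro _ ⟨p, hp, rfl⟩
    exact ⟨(p.1 + p.2, p.2), ⟨⟨p, hp, rfl⟩, ⟨p, hp, rfl⟩⟩, add_sub_cancel_right _ _⟩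
  calc dimH (Prod.fst '' A) ≤ dimH (E ×ˢ F) := (dimH_mono hsub).trans
        ((LipschitzWith.prod_fst.sub LipschitzWith.prod_snd).dimH_image_le _)
    _ ≤ dimH E + ENNReal.ofReal (upperBoxDim F) :=
        dimH_prod_le_dimH_add_upperBoxDim E (LipschitzWith.prod_snd.isBounded_image hbd)

/-- For a nonempty bounded `A ⊆ ℝ²`,
`dim_H π₁(A) ≤ dim_H Σ(A) + upper box dimension of π₂(A)`, where `Σ(x,y) = x + y`. -/
theorem dimH_fst_le_dimH_sum_add_upperBoxDim_snd (A : Set (ℝ × ℝ))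
    (hne : A.Nonempty) (hbd : Bornology.IsBounded A) :
    dimH (Prod.fst '' A) ≤
      dimH ((fun p : ℝ × ℝ => p.1 + p.2) '' A) + ENNReal.ofReal (upperBoxDim (Prod.snd '' A)) :=
  dimH_fst_le_dimH_sum_add_upperBoxDim_snd_general A hbd
end
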